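/- arXiv:1306.3835 — 4 statements merged into one kernel-verified Lean document; each statement's English description precedes it below -/
import Mathlib

section
/- For every polynomial p with complex coefficients and every n ∈ ℕ, the entire function Q_n[p](x) := (−1)^n 3^{−n} e^{x³} (d/dx)^n (e^{−x³} p(x)) is a polynomial of degree 2n + deg p; it satisfies the difference-differential equation Q_n[p](x) = x² Q_{n−1}[p](x) − (1/3) (Q_{n−1}[p])'(x) for all n ≥ 1 and all x ∈ ℂ; and if p is monic then Q_n[p] is monic. -/
/-!
Write the `n`-th derivative of `e^{-x³} p(x)` as `(-3)ⁿ e^{-x³} qₙ(x)`. The product rule gives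
`qₙ₊₁ = x² qₙ - qₙ' / 3`, and the factors `(-1)ⁿ 3⁻ⁿ e^{x³}` in `Q n p` cancel the rest, so
`Q n p = qₙ`. In the recursion `qₙ'` has lower degree than `x² qₙ`, so each step raises the degree
by two and keeps the leading coefficient.
-/

/-- `Q n p x = (−1)ⁿ 3⁻ⁿ e^{x³} (d/dx)ⁿ (e^{−x³} p(x))`. -/
noncomputable def Q (n : ℕ) (p : Polynomial ℂ) : ℂ → ℂ := fun x =>
  (-1) ^ n / 3 ^ n * Complex.exp (x ^ 3) *
    iteratedDeriv n (fun z => Complex.exp (-z ^ 3) * p.eval z) x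

open Polynomial

section

variable {R : Type*} [Ring R] [Nontrivial R] (c : R) (q : R[X])

theorem degree_C_mul_derivative_lt_degree_X_sq_mul (hq : q ≠ 0) :
    (C c * derivative q).degree < (X ^ 2 * q).degree := by
  rw [(monic_X_pow 2).degree_mul_comm, (monic_X_pow 2).degree_mul]
  calc (C c * derivative q).degree ≤ (derivative q).degree :=
        (degree_mul_le _ _).trans <| by
          simpa using add_le_add_left (degree_C_le (a := c)) (derivative q).degree
    _ < q.degree := degree_derivative_lt hq
    _ ≤ q.degree + (X ^ 2 : R[X]).degree := le_add_of_nonneg_right (by simp)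

theorem degree_X_sq_mul_sub_C_mul_derivative :
    (X ^ 2 * q - C c * derivative q).degree = 2 + q.degree := by
  rcases eq_or_ne q 0 with rfl | hq
  · simp
  rw [degree_sub_eq_left_of_degree_lt (degree_C_mul_derivative_lt_degree_X_sq_mul c q hq),
    (monic_X_pow 2).degree_mul_comm, (monic_X_pow 2).degree_mul, degree_X_pow, add_comm]
  rfl

theorem leadingCoeff_X_sq_mul_sub_C_mul_derivative :
    (X ^ 2 * q - C c * derivative q).leadingCoeff = q.leadingCoeff := by
  rcases eq_or_ne q 0 with rfl | hq
  · simp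
  rw [leadingCoeff_sub_of_degree_lt (degree_C_mul_derivative_lt_degree_X_sq_mul c q hq),
    leadingCoeff_monic_mul (monic_X_pow 2)]

end

noncomputable def QPoly (p : ℂ[X]) : ℕ → ℂ[X]
  | 0 => p
  | n + 1 => X ^ 2 * QPoly p n - C (1 / 3) * derivative (QPoly p n)

theorem degree_QPoly (p : ℂ[X]) (n : ℕ) :
    (QPoly p n).degree = ((2 * n : ℕ) : WithBot ℕ) + p.degree := by
  induction n with
  | zero => simp [QPoly]
  | succ n ih =>
    rw [QPoly, degree_X_sq_mul_sub_C_mul_derivative, ih, ← add_assoc]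
    congr 1
    norm_cast
    ring

theorem leadingCoeff_QPoly (p : ℂ[X]) (n : ℕ) : (QPoly p n).leadingCoeff = p.leadingCoeff := by
  induction n with
  | zero => rfl
  | succ n ih => rw [QPoly, leadingCoeff_X_sq_mul_sub_C_mul_derivative, ih]

theorem hasDerivAt_exp_neg_cube_mul_eval (q : ℂ[X]) (x : ℂ) :
    HasDerivAt (fun z => Complex.exp (-z ^ 3) * q.eval z)
      (-3 * (Complex.exp (-x ^ 3) * (X ^ 2 * q - C (1 / 3) * derivative q).eval x)) x := by
  have hexp : HasDerivAt (fun z : ℂ => Complex.exp (-z ^ 3))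
      (Complex.exp (-x ^ 3) * -(3 * x ^ 2)) x := by
    simpa using ((hasDerivAt_pow 3 x).neg).cexp
  refine (hexp.mul (q.hasDerivAt x)).congr_deriv ?_
  rw [eval_sub, eval_mul, eval_mul, eval_pow, eval_X, eval_C]
  ring

theorem iteratedDeriv_exp_neg_cube_mul_eval (p : ℂ[X]) (n : ℕ) :
    iteratedDeriv n (fun z => Complex.exp (-z ^ 3) * p.eval z)
      = fun x => (-3) ^ n * (Complex.exp (-x ^ 3) * (QPoly p n).eval x) := by
  induction n with
  | zero => simp [QPoly]
  | succ n ih =>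
    ext x
    rw [iteratedDeriv_succ, ih, ((hasDerivAt_exp_neg_cube_mul_eval _ x).const_mul _).deriv, QPoly]
    ring

theorem Q_eq_eval_QPoly (n : ℕ) (p : ℂ[X]) : Q n p = fun x => (QPoly p n).eval x := by
  ext x
  have hexp : Complex.exp (x ^ 3) * Complex.exp (-x ^ 3) = 1 := by
    rw [← Complex.exp_add, add_neg_cancel, Complex.exp_zero]
  have hsign : (-1 : ℂ) ^ n / 3 ^ n * (-3) ^ n = 1 := by
    rw [div_mul_eq_mul_div, ← mul_pow, div_eq_one_iff_eq (pow_ne_zero n three_ne_zero)]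
    norm_num
  calc Q n p x = ((-1) ^ n / 3 ^ n * (-3) ^ n) * (Complex.exp (x ^ 3) * Complex.exp (-x ^ 3))
        * (QPoly p n).eval x := by
        rw [Q, iteratedDeriv_exp_neg_cube_mul_eval]; ring
    _ = (QPoly p n).eval x := by rw [hexp, hsign, one_mul, one_mul]

/-- `Q n p` is a polynomial of degree `2n + deg p`, it is monic
whenever `p` is monic, and it satisfies the difference-differential equation
`Q_n[p](x) = x² Q_{n−1}[p](x) − (1/3)(Q_{n−1}[p])'(x)` for `n ≥ 1`. -/
theorem stmt2 (p : Polynomial ℂ) (n : ℕ) :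
    (∃ q : Polynomial ℂ,
      (∀ x : ℂ, Q n p x = q.eval x) ∧
      q.degree = ((2 * n : ℕ) : WithBot ℕ) + p.degree ∧
      (p.Monic → q.Monic)) ∧
    (1 ≤ n → ∀ x : ℂ,
      Q n p x = x ^ 2 * Q (n - 1) p x - (1 / 3) * deriv (Q (n - 1) p) x) := by
  refine ⟨⟨QPoly p n, fun x => by rw [Q_eq_eval_QPoly], degree_QPoly p n,
    fun hp => (leadingCoeff_QPoly p n).trans hp⟩, ?_⟩
  rintro hn x
  obtain ⟨m, rfl⟩ := Nat.exists_eq_add_of_le' hn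
  simp only [Q_eq_eval_QPoly, add_tsub_cancel_right, Polynomial.deriv, QPoly, eval_sub, eval_mul,
    eval_pow, eval_X, eval_C]
end

section
/- Every positive solution (a_n), (b_n) of the string system satisfies lim_{n→∞} a_n / n^{2/3} = 1/(2·3^{2/3}) and lim_{n→∞} b_n / n^{1/3} = 3^{−1/3}. -/
/-!
Write `u n = a n / n ^ (2/3)`; the equations give `0 ≤ u n ≤ 1`. If eventually `u ≤ U`, then
`b n ^ 2` and `b (n-1) ^ 2` are at most about `2 U n ^ (2/3)`, and `n = 3 a n (b n + b (n-1))`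
forces `72 U (u n) ^ 2 ≥ 1 - o(1)`; symmetrically, eventually `u ≥ V` forces
`72 V (u n) ^ 2 ≤ 1 + o(1)`. Letting `U` decrease to `L = limsup u` and `V` increase to
`l = liminf u` gives `72 L l ^ 2 ≥ 1 ≥ 72 l L ^ 2`, hence `l = L` and `72 L ^ 3 = 1`.
The limit of `b n / n ^ (1/3)` then follows from `b n ^ 2 = a n + a (n+1)`.
-/

open Filter Topology

section Bootstrap

variable {u r : ℕ → ℝ} {C : ℝ}

theorem one_le_mul_liminf_sq (hu : ∀ n, 0 ≤ u n) (hbdd : IsBoundedUnder (· ≤ ·) atTop u)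
    (hr : Tendsto r atTop (𝓝 1)) (hC : 0 < C) (h : ∀ᶠ n in atTop, r n ≤ C * u n ^ 2) :
    1 ≤ C * liminf u atTop ^ 2 := by
  have hlim : Tendsto (fun n => √(r n / C)) atTop (𝓝 √(1 / C)) := (hr.div_const C).sqrt
  have hle : √(1 / C) ≤ liminf u atTop := by
    rw [← hlim.liminf_eq]
    refine liminf_le_liminf ?_ hlim.isBoundedUnder_ge hbdd.isCoboundedUnder_ge
    filter_upwards [h] with n hn
    rw [Real.sqrt_le_left (hu n), div_le_iff₀ hC]
    linarith
  rw [Real.sqrt_le_iff, div_le_iff₀ hC] at hle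
  linarith

theorem mul_limsup_sq_le_one (hu : ∀ n, 0 ≤ u n) (hbdd : IsBoundedUnder (· ≤ ·) atTop u)
    (hr : Tendsto r atTop (𝓝 1)) (hC : 0 < C) (h : ∀ᶠ n in atTop, C * u n ^ 2 ≤ r n) :
    C * limsup u atTop ^ 2 ≤ 1 := by
  have hbdd' : IsBoundedUnder (· ≥ ·) atTop u := isBoundedUnder_of ⟨0, hu⟩
  have hlim : Tendsto (fun n => √(r n / C)) atTop (𝓝 √(1 / C)) := (hr.div_const C).sqrt
  have hle : limsup u atTop ≤ √(1 / C) := by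
    rw [← hlim.limsup_eq]
    refine limsup_le_limsup ?_ hbdd'.isCoboundedUnder_le hlim.isBoundedUnder_le
    filter_upwards [h] with n hn
    rw [Real.le_sqrt (hu n) (div_nonneg ?_ hC.le), le_div_iff₀ hC]
    · linarith
    · nlinarith [hu n]
  have hL : 0 ≤ limsup u atTop :=
    (le_liminf_of_le hbdd.isCoboundedUnder_ge (.of_forall hu)).trans (liminf_le_limsup hbdd hbdd')
  rw [Real.le_sqrt hL (by positivity), le_div_iff₀ hC] at hle
  linarith

theorem tendsto_of_bootstrap_bounds {ρ σ : ℕ → ℝ} {K T : ℝ} (hT : 0 < T) (hKT : K * T ^ 3 = 1)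
    (hu : ∀ n, 0 ≤ u n) (hbdd : IsBoundedUnder (· ≤ ·) atTop u)
    (hρ : Tendsto ρ atTop (𝓝 1)) (hσ : Tendsto σ atTop (𝓝 1))
    (hup : ∀ U, 0 ≤ U → (∀ᶠ n in atTop, u n ≤ U) → ∀ᶠ n in atTop, ρ n ≤ K * U * u n ^ 2)
    (hlow : ∀ V, 0 ≤ V → (∀ᶠ n in atTop, V ≤ u n) → ∀ᶠ n in atTop, K * V * u n ^ 2 ≤ σ n) :
    Tendsto u atTop (𝓝 T) := by
  have hK : 0 < K := (pos_iff_pos_of_mul_pos (hKT ▸ one_pos)).2 (pow_pos hT 3)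
  have hbdd' : IsBoundedUnder (· ≥ ·) atTop u := isBoundedUnder_of ⟨0, hu⟩
  set L := limsup u atTop
  set l := liminf u atTop
  have hl0 : 0 ≤ l := le_liminf_of_le hbdd.isCoboundedUnder_ge (.of_forall hu)
  have hlL : l ≤ L := liminf_le_limsup hbdd hbdd'
  have hU : ∀ U, L < U → 1 ≤ K * U * l ^ 2 := fun U hU =>
    one_le_mul_liminf_sq hu hbdd hρ (mul_pos hK (by linarith)) <|
      hup U (by linarith) ((eventually_lt_of_limsup_lt hU hbdd).mono fun _ => le_of_lt)
  have hV : ∀ V, 0 < V → V < l → K * V * L ^ 2 ≤ 1 := fun V hV0 hV =>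
    mul_limsup_sq_le_one hu hbdd hσ (by positivity) <|
      hlow V hV0.le ((eventually_lt_of_lt_liminf hV hbdd').mono fun _ => le_of_lt)
  have hKLl : 1 ≤ K * L * l ^ 2 :=
    ge_of_tendsto (((continuous_const.mul continuous_id).mul continuous_const).tendsto L
      |>.mono_left (nhdsWithin_le_nhds (s := Set.Ioi L)))
      (eventually_nhdsWithin_of_forall hU)
  have hl : 0 < l := hl0.lt_of_ne fun h0 => by rw [← h0] at hKLl; norm_num at hKLl
  have hKlL : K * l * L ^ 2 ≤ 1 :=
    le_of_tendsto (((continuous_const.mul continuous_id).mul continuous_const).tendsto l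
      |>.mono_left (nhdsWithin_le_nhds (s := Set.Iio l)))
      (mem_of_superset (Ioo_mem_nhdsLT hl) fun V hV' => hV V hV'.1 hV'.2)
  have hLl : L ≤ l := by nlinarith [mul_pos hK (mul_pos hl (hl.trans_le hlL))]
  have hlL_eq : l = L := le_antisymm hlL hLl
  have hLT : L = T := by
    rw [← pow_left_inj₀ (hl.trans_le hlL).le hT.le three_ne_zero]
    rw [hlL_eq] at hKLl hKlL
    exact mul_left_cancel₀ hK.ne' (by linarith)
  exact tendsto_of_liminf_eq_limsup (hlL_eq.trans hLT) hLT hbdd hbdd'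

end Bootstrap

theorem rpow_two_thirds_pow_three {x : ℝ} (hx : 0 ≤ x) : (x ^ (2 / 3 : ℝ)) ^ 3 = x ^ 2 := by
  rw [← Real.rpow_natCast, ← Real.rpow_mul hx]
  norm_num

theorem tendsto_rpow_div_rpow_succ (r : ℝ) :
    Tendsto (fun n : ℕ => (n : ℝ) ^ r / ((n + 1 : ℕ) : ℝ) ^ r) atTop (𝓝 1) := by
  have h := ((Real.continuousAt_rpow_const 1 r (.inl one_ne_zero)).tendsto).comp
    (tendsto_natCast_div_add_atTop (1 : ℝ))
  rw [Real.one_rpow] at h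
  refine h.congr fun n => ?_
  simp only [Function.comp_apply, Nat.cast_add, Nat.cast_one]
  exact Real.div_rpow n.cast_nonneg (by positivity) r

theorem tendsto_rpow_succ_div_rpow (r : ℝ) :
    Tendsto (fun n : ℕ => ((n + 1 : ℕ) : ℝ) ^ r / (n : ℝ) ^ r) atTop (𝓝 1) := by
  simpa using (tendsto_rpow_div_rpow_succ r).inv₀ one_ne_zero

theorem tendsto_rpow_div_rpow_pred (r : ℝ) :
    Tendsto (fun n : ℕ => (n : ℝ) ^ r / ((n - 1 : ℕ) : ℝ) ^ r) atTop (𝓝 1) := by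
  refine ((tendsto_rpow_succ_div_rpow r).comp (tendsto_sub_atTop_nat 1)).congr' ?_
  filter_upwards [eventually_ge_atTop 1] with n hn
  simp only [Function.comp_apply, Nat.sub_add_cancel hn]

structure IsPosStringSolution (a b : ℕ → ℝ) : Prop where
  a_zero : a 0 = 0
  a_succ_pos : ∀ n, 0 < a (n + 1)
  b_pos : ∀ n, 0 < b n
  add_eq_sq : ∀ n, a n + a (n + 1) = b n ^ 2
  mul_add_eq : ∀ n, 1 ≤ n → 3 * a n * (b n + b (n - 1)) = n

namespace IsPosStringSolution

variable {a b : ℕ → ℝ}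

theorem a_nonneg (h : IsPosStringSolution a b) (n : ℕ) : 0 ≤ a n := by
  cases n with
  | zero => exact h.a_zero.ge
  | succ n => exact (h.a_succ_pos n).le

theorem add_eq_sq_pred (h : IsPosStringSolution a b) {n : ℕ} (hn : 1 ≤ n) :
    a (n - 1) + a n = b (n - 1) ^ 2 := by
  simpa [Nat.sub_add_cancel hn] using h.add_eq_sq (n - 1)

theorem natCast_sq_eq (h : IsPosStringSolution a b) {n : ℕ} (hn : 1 ≤ n) :
    (n : ℝ) ^ 2 = 9 * a n ^ 2 * (b n + b (n - 1)) ^ 2 := by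
  rw [← h.mul_add_eq n hn]
  ring

theorem natCast_sq_le_of_b_sq_le (h : IsPosStringSolution a b) {n : ℕ} (hn : 1 ≤ n) {M : ℝ}
    (hb : b n ^ 2 ≤ M) (hb' : b (n - 1) ^ 2 ≤ M) : (n : ℝ) ^ 2 ≤ 36 * M * a n ^ 2 := by
  have hsum : (b n + b (n - 1)) ^ 2 ≤ 4 * M := by nlinarith [sq_nonneg (b n - b (n - 1))]
  rw [h.natCast_sq_eq hn]
  nlinarith [mul_le_mul_of_nonneg_left hsum (sq_nonneg (a n))]

theorem le_natCast_sq_of_le_b_sq (h : IsPosStringSolution a b) {n : ℕ} (hn : 1 ≤ n) {m : ℝ}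
    (hm : 0 ≤ m) (hb : m ≤ b n ^ 2) (hb' : m ≤ b (n - 1) ^ 2) : 36 * m * a n ^ 2 ≤ (n : ℝ) ^ 2 := by
  have hsqrt : ∀ k, m ≤ b k ^ 2 → √m ≤ b k := fun k hk => by
    rwa [Real.sqrt_le_left (h.b_pos k).le]
  have hsum : 4 * m ≤ (b n + b (n - 1)) ^ 2 := by
    have := pow_le_pow_left₀ (by positivity) (add_le_add (hsqrt _ hb) (hsqrt _ hb')) 2
    rw [← two_mul, mul_pow, Real.sq_sqrt hm] at this
    linarith
  rw [h.natCast_sq_eq hn]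
  nlinarith [mul_le_mul_of_nonneg_left hsum (sq_nonneg (a n))]

theorem natCast_sq_le_of_a_le (h : IsPosStringSolution a b) {n : ℕ} (hn : 1 ≤ n) {M : ℝ}
    (h₀ : a (n - 1) ≤ M) (h₁ : a n ≤ M) (h₂ : a (n + 1) ≤ M) :
    (n : ℝ) ^ 2 ≤ 72 * M * a n ^ 2 := by
  have := h.natCast_sq_le_of_b_sq_le hn (M := 2 * M) (by rw [← h.add_eq_sq]; linarith)
    (by rw [← h.add_eq_sq_pred hn]; linarith)
  linarith

theorem le_natCast_sq_of_le_a (h : IsPosStringSolution a b) {n : ℕ} (hn : 1 ≤ n) {m : ℝ}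
    (hm : 0 ≤ m) (h₀ : m ≤ a (n - 1)) (h₁ : m ≤ a n) (h₂ : m ≤ a (n + 1)) :
    72 * m * a n ^ 2 ≤ (n : ℝ) ^ 2 := by
  have := h.le_natCast_sq_of_le_b_sq hn (m := 2 * m) (by positivity)
    (by rw [← h.add_eq_sq]; linarith) (by rw [← h.add_eq_sq_pred hn]; linarith)
  linarith

theorem a_le_rpow_two_thirds (h : IsPosStringSolution a b) (n : ℕ) :
    a n ≤ (n : ℝ) ^ (2 / 3 : ℝ) := by
  refine le_of_pow_le_pow_left₀ three_ne_zero (by positivity) ?_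
  rw [rpow_two_thirds_pow_three n.cast_nonneg]
  rcases Nat.eq_zero_or_pos n with rfl | hn
  · simp [h.a_zero]
  · have := h.le_natCast_sq_of_le_b_sq hn (h.a_nonneg n)
      (by linarith [h.add_eq_sq n, h.a_succ_pos n])
      (by linarith [h.add_eq_sq_pred hn, h.a_nonneg (n - 1)])
    nlinarith [pow_nonneg (h.a_nonneg n) 3]

/-- Also true at `n = 0`, where the quotient is the junk value `0 / 0 = 0`, since `a 0 = 0`. -/
theorem div_rpow_mul_rpow (h : IsPosStringSolution a b) (n : ℕ) :
    a n / (n : ℝ) ^ (2 / 3 : ℝ) * (n : ℝ) ^ (2 / 3 : ℝ) = a n := by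
  rcases Nat.eq_zero_or_pos n with rfl | hn
  · simp [h.a_zero]
  · exact div_mul_cancel₀ _ (by positivity)

theorem eventually_div_le_mul_sq (h : IsPosStringSolution a b) {U : ℝ} (hU : 0 ≤ U)
    (hu : ∀ᶠ n in atTop, a n / (n : ℝ) ^ (2 / 3 : ℝ) ≤ U) :
    ∀ᶠ n : ℕ in atTop, (n : ℝ) ^ (2 / 3 : ℝ) / ((n + 1 : ℕ) : ℝ) ^ (2 / 3 : ℝ) ≤
      72 * U * (a n / (n : ℝ) ^ (2 / 3 : ℝ)) ^ 2 := by
  obtain ⟨N, hN⟩ := eventually_atTop.1 hu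
  filter_upwards [eventually_ge_atTop (N + 1)] with n hn
  have ha : ∀ k, N ≤ k → k ≤ n + 1 → a k ≤ U * ((n + 1 : ℕ) : ℝ) ^ (2 / 3 : ℝ) :=
    fun k hk hkn => by
      rw [← h.div_rpow_mul_rpow k]
      exact mul_le_mul (hN k hk) (Real.rpow_le_rpow k.cast_nonneg (Nat.cast_le.2 hkn) (by norm_num))
        (by positivity) hU
  have key := h.natCast_sq_le_of_a_le (by omega) (ha _ (by omega) (by omega))
    (ha _ (by omega) (by omega)) (ha _ (by omega) le_rfl)
  rw [← h.div_rpow_mul_rpow n, ← rpow_two_thirds_pow_three n.cast_nonneg] at key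
  have hx : 0 < (n : ℝ) ^ (2 / 3 : ℝ) := Real.rpow_pos_of_pos (Nat.cast_pos.2 (by omega)) _
  generalize (n : ℝ) ^ (2 / 3 : ℝ) = x at key hx ⊢
  generalize a n / x = v at key ⊢
  rw [div_le_iff₀ (by positivity)]
  exact le_of_mul_le_mul_left (by ring_nf at key ⊢; linarith) (by positivity : 0 < x ^ 2)

theorem eventually_mul_sq_le_div (h : IsPosStringSolution a b) {V : ℝ} (hV : 0 ≤ V)
    (hu : ∀ᶠ n in atTop, V ≤ a n / (n : ℝ) ^ (2 / 3 : ℝ)) :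
    ∀ᶠ n : ℕ in atTop, 72 * V * (a n / (n : ℝ) ^ (2 / 3 : ℝ)) ^ 2 ≤
      (n : ℝ) ^ (2 / 3 : ℝ) / ((n - 1 : ℕ) : ℝ) ^ (2 / 3 : ℝ) := by
  obtain ⟨N, hN⟩ := eventually_atTop.1 hu
  filter_upwards [eventually_ge_atTop (N + 2)] with n hn
  have ha : ∀ k, n - 1 ≤ k → V * ((n - 1 : ℕ) : ℝ) ^ (2 / 3 : ℝ) ≤ a k := fun k hk => by
    rw [← h.div_rpow_mul_rpow k]
    exact mul_le_mul (hN k (by omega)) (Real.rpow_le_rpow (Nat.cast_nonneg _) (Nat.cast_le.2 hk)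
      (by norm_num)) (by positivity) (by linarith [hN k (by omega)])
  have key := h.le_natCast_sq_of_le_a (by omega) (by positivity) (ha _ le_rfl)
    (ha _ (by omega)) (ha _ (by omega))
  rw [← h.div_rpow_mul_rpow n, ← rpow_two_thirds_pow_three n.cast_nonneg] at key
  have hy : 0 < ((n - 1 : ℕ) : ℝ) ^ (2 / 3 : ℝ) :=
    Real.rpow_pos_of_pos (Nat.cast_pos.2 (by omega)) _
  have hx : 0 < (n : ℝ) ^ (2 / 3 : ℝ) := Real.rpow_pos_of_pos (Nat.cast_pos.2 (by omega)) _
  generalize (n : ℝ) ^ (2 / 3 : ℝ) = x at key hx ⊢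
  generalize a n / x = v at key ⊢
  rw [le_div_iff₀ hy]
  exact le_of_mul_le_mul_left (by ring_nf at key ⊢; linarith) (by positivity : 0 < x ^ 2)

theorem isBoundedUnder_div_rpow (h : IsPosStringSolution a b) :
    IsBoundedUnder (· ≤ ·) atTop fun n => a n / (n : ℝ) ^ (2 / 3 : ℝ) :=
  isBoundedUnder_of ⟨1, fun n => div_le_one_of_le₀ (h.a_le_rpow_two_thirds n) (by positivity)⟩

theorem tendsto_b_div_rpow (h : IsPosStringSolution a b) {T : ℝ}
    (hu : Tendsto (fun n => a n / (n : ℝ) ^ (2 / 3 : ℝ)) atTop (𝓝 T)) :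
    Tendsto (fun n => b n / (n : ℝ) ^ (1 / 3 : ℝ)) atTop (𝓝 √(2 * T)) := by
  have hsq : Tendsto (fun n => (b n / (n : ℝ) ^ (1 / 3 : ℝ)) ^ 2) atTop (𝓝 (2 * T)) := by
    have := hu.add ((hu.comp (tendsto_add_atTop_nat 1)).mul (tendsto_rpow_succ_div_rpow (2 / 3)))
    rw [mul_one, ← two_mul] at this
    refine this.congr' ?_
    filter_upwards [eventually_ge_atTop 1] with n hn
    have hq : ((n : ℝ) ^ (1 / 3 : ℝ)) ^ 2 = (n : ℝ) ^ (2 / 3 : ℝ) := by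
      rw [← Real.rpow_natCast, ← Real.rpow_mul n.cast_nonneg]
      norm_num
    have hx : (n : ℝ) ^ (2 / 3 : ℝ) ≠ 0 := (Real.rpow_pos_of_pos (Nat.cast_pos.2 hn) _).ne'
    rw [div_pow, hq, ← h.add_eq_sq]
    simp only [Function.comp_apply]
    field_simp
  exact hsq.sqrt.congr fun n => Real.sqrt_sq (div_nonneg (h.b_pos n).le (by positivity))

end IsPosStringSolution

/-- Every positive solution of the string system satisfies
`aₙ/n^{2/3} → 1/(2·3^{2/3})` and `bₙ/n^{1/3} → 3^{−1/3}`. -/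
theorem stmt8 (a b : ℕ → ℝ) (ha0 : a 0 = 0)
    (hapos : ∀ n : ℕ, 0 < a (n + 1)) (hbpos : ∀ n : ℕ, 0 < b n)
    (h1 : ∀ n : ℕ, a n + a (n + 1) = (b n) ^ 2)
    (h2 : ∀ n : ℕ, 1 ≤ n → 3 * a n * (b n + b (n - 1)) = (n : ℝ)) :
    Filter.Tendsto (fun n : ℕ => a n / (n : ℝ) ^ ((2 : ℝ) / 3)) Filter.atTop
      (nhds (1 / (2 * (3 : ℝ) ^ ((2 : ℝ) / 3)))) ∧
    Filter.Tendsto (fun n : ℕ => b n / (n : ℝ) ^ ((1 : ℝ) / 3)) Filter.atTop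
      (nhds ((3 : ℝ) ^ (-(1 : ℝ) / 3))) := by
  have h : IsPosStringSolution a b := ⟨ha0, hapos, hbpos, h1, h2⟩
  have h9 : ((3 : ℝ) ^ (2 / 3 : ℝ)) ^ 3 = 9 := by
    rw [rpow_two_thirds_pow_three (by norm_num)]
    norm_num
  have hu : Tendsto (fun n : ℕ => a n / (n : ℝ) ^ (2 / 3 : ℝ)) atTop
      (𝓝 (1 / (2 * (3 : ℝ) ^ (2 / 3 : ℝ)))) :=
    tendsto_of_bootstrap_bounds (K := 72) (by positivity)
      (by rw [div_pow, mul_pow, h9]; norm_num) (fun n => div_nonneg (h.a_nonneg n) (by positivity))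
      h.isBoundedUnder_div_rpow (tendsto_rpow_div_rpow_succ _) (tendsto_rpow_div_rpow_pred _)
      (fun _ hU => h.eventually_div_le_mul_sq hU) (fun _ hV => h.eventually_mul_sq_le_div hV)
  refine ⟨hu, ?_⟩
  have hsq : 2 * (1 / (2 * (3 : ℝ) ^ (2 / 3 : ℝ))) = ((3 : ℝ) ^ (-(1 : ℝ) / 3)) ^ 2 := by
    rw [← Real.rpow_natCast, ← Real.rpow_mul (by norm_num),
      show -(1 : ℝ) / 3 * (2 : ℕ) = -(2 / 3) by norm_num, Real.rpow_neg (by norm_num)]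
    field_simp
  rw [← Real.sqrt_sq (Real.rpow_nonneg (by norm_num : (0 : ℝ) ≤ 3) _), ← hsq]
  exact h.tendsto_b_div_rpow hu
end

section
/- Every positive solution (a_n), (b_n) of the string system satisfies, for all n ≥ 1: a_n ≤ b_n², 3 a_n b_n ≤ n, and hence 9 a_n³ ≤ n², i.e. 0 ≤ a_n / n^{2/3} ≤ 9^{−1/3}. -/
lemma three_mul_mul_le_of_three_mul_mul_add_eq {a b b' n : ℝ} (ha : 0 ≤ a) (hb' : 0 < b')
    (h : 3 * a * (b + b') = n) : 3 * a * b ≤ n := by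
  nlinarith

lemma nine_mul_pow_three_le_sq {a b n : ℝ} (ha : 0 ≤ a) (hb : 0 ≤ b) (hab : a ≤ b ^ 2)
    (hn : 3 * a * b ≤ n) : 9 * a ^ 3 ≤ n ^ 2 :=
  calc 9 * a ^ 3 = 9 * a ^ 2 * a := by ring
    _ ≤ 9 * a ^ 2 * b ^ 2 := by gcongr
    _ = (3 * a * b) ^ 2 := by ring
    _ ≤ n ^ 2 := by gcongr

lemma div_rpow_two_thirds_le_of_nine_mul_pow_three_le {x y : ℝ} (hy : 0 < y)
    (h : 9 * x ^ 3 ≤ y ^ 2) : x / y ^ ((2 : ℝ) / 3) ≤ (9 : ℝ) ^ (-(1 : ℝ) / 3) := by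
  have hy_cube : (y ^ ((2 : ℝ) / 3)) ^ 3 = y ^ 2 := by
    rw [← Real.rpow_natCast, ← Real.rpow_mul hy.le]
    norm_num
  have h9_cube : ((9 : ℝ) ^ (-(1 : ℝ) / 3)) ^ 3 = 9⁻¹ := by
    rw [← Real.rpow_natCast, ← Real.rpow_mul (by norm_num)]
    norm_num
  refine le_of_pow_le_pow_left₀ three_ne_zero (by positivity) ?_
  rw [div_pow, hy_cube, h9_cube, div_le_iff₀ (by positivity)]
  linarith

theorem stmt9_general (a b : ℕ → ℝ)
    (hapos : ∀ n : ℕ, 0 < a (n + 1)) (hbpos : ∀ n : ℕ, 0 < b n)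
    (h1 : ∀ n : ℕ, a n + a (n + 1) = (b n) ^ 2)
    (h2 : ∀ n : ℕ, 1 ≤ n → 3 * a n * (b n + b (n - 1)) = (n : ℝ)) :
    ∀ n : ℕ, 1 ≤ n →
      a n ≤ (b n) ^ 2 ∧
      3 * a n * b n ≤ (n : ℝ) ∧
      9 * (a n) ^ 3 ≤ (n : ℝ) ^ 2 ∧
      0 ≤ a n / (n : ℝ) ^ ((2 : ℝ) / 3) ∧
      a n / (n : ℝ) ^ ((2 : ℝ) / 3) ≤ (9 : ℝ) ^ (-(1 : ℝ) / 3) := by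
  intro n hn
  obtain ⟨m, rfl⟩ := Nat.exists_eq_add_of_le' hn
  have ha : 0 < a (m + 1) := hapos m
  have hab : a (m + 1) ≤ b (m + 1) ^ 2 := by linarith [h1 (m + 1), hapos (m + 1)]
  have hprod : 3 * a (m + 1) * b (m + 1) ≤ (m + 1 : ℕ) :=
    three_mul_mul_le_of_three_mul_mul_add_eq ha.le (hbpos m) (h2 (m + 1) hn)
  have hcube := nine_mul_pow_three_le_sq ha.le (hbpos (m + 1)).le hab hprod
  exact ⟨hab, hprod, hcube, by positivity,
    div_rpow_two_thirds_le_of_nine_mul_pow_three_le (by positivity) hcube⟩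

/-- Every positive solution of the string system satisfies, for
`n ≥ 1`: `aₙ ≤ bₙ²`, `3 aₙ bₙ ≤ n`, hence `9 aₙ³ ≤ n²`, i.e.
`0 ≤ aₙ/n^{2/3} ≤ 9^{−1/3}`. -/
theorem stmt9 (a b : ℕ → ℝ) (ha0 : a 0 = 0)
    (hapos : ∀ n : ℕ, 0 < a (n + 1)) (hbpos : ∀ n : ℕ, 0 < b n)
    (h1 : ∀ n : ℕ, a n + a (n + 1) = (b n) ^ 2)
    (h2 : ∀ n : ℕ, 1 ≤ n → 3 * a n * (b n + b (n - 1)) = (n : ℝ)) :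
    ∀ n : ℕ, 1 ≤ n →
      a n ≤ (b n) ^ 2 ∧
      3 * a n * b n ≤ (n : ℝ) ∧
      9 * (a n) ^ 3 ≤ (n : ℝ) ^ 2 ∧
      0 ≤ a n / (n : ℝ) ^ ((2 : ℝ) / 3) ∧
      a n / (n : ℝ) ^ ((2 : ℝ) / 3) ≤ (9 : ℝ) ^ (-(1 : ℝ) / 3) :=
  stmt9_general a b hapos hbpos h1 h2
end

section
/- For each n ∈ ℕ let β_n : ℝ → ℂ and g_n : ℝ → ℂ be differentiable functions with g_0 ≡ 0, satisfying for all t ∈ ℝ the Toda equations g_n'(t) = g_n(t)(β_n(t) − β_{n−1}(t)) for n ≥ 1 and β_n'(t) = g_{n+1}(t) − g_n(t) for n ≥ 0, together with the string equations g_n(t) + g_{n+1}(t) + β_n(t)² = t/3 for n ≥ 0 and 3 g_n(t)(β_{n−1}(t) + β_n(t)) = n for n ≥ 1. Then each β_n is twice differentiable and satisfies the Painlevé II equation β_n''(t) = 2 β_n(t)³ − (2t/3) β_n(t) + (2n+1)/3. -/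
/-!
Differentiating `βₙ' = gₙ₊₁ − gₙ` once more gives `βₙ'' = gₙ₊₁' − gₙ'`. In the Toda equation
`gₘ' = gₘ(βₘ − βₘ₋₁)` the second string equation `3gₘ(βₘ₋₁ + βₘ) = m` eliminates either `βₘ₋₁` or
`βₘ`, so `gₘ' = 2gₘβₘ − m/3 = m/3 − 2gₘβₘ₋₁`. Using the first form at `m = n` and the second at
`m = n + 1` gives `βₙ'' = (2n+1)/3 − 2βₙ(gₙ + gₙ₊₁)`, and the first string equation replaces
`gₙ + gₙ₊₁` by `t/3 − βₙ²`.
-/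

section TodaString

variable {β g : ℕ → ℝ → ℂ}

lemma deriv_g_succ_eq_sub (hToda1 : ∀ n : ℕ, 1 ≤ n → ∀ t : ℝ,
      deriv (g n) t = g n t * (β n t - β (n - 1) t))
    (hstring2 : ∀ n : ℕ, 1 ≤ n → ∀ t : ℝ, 3 * g n t * (β (n - 1) t + β n t) = (n : ℂ))
    (n : ℕ) (t : ℝ) :
    deriv (g (n + 1)) t = ((n : ℂ) + 1) / 3 - 2 * g (n + 1) t * β n t := by
  have hToda := hToda1 (n + 1) n.succ_pos t
  have hString := hstring2 (n + 1) n.succ_pos t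
  simp only [Nat.add_sub_cancel, Nat.cast_succ] at hToda hString
  linear_combination hToda + (1 / 3 : ℂ) * hString

lemma deriv_g_eq_sub (hg0 : ∀ t : ℝ, g 0 t = 0)
    (hToda1 : ∀ n : ℕ, 1 ≤ n → ∀ t : ℝ,
      deriv (g n) t = g n t * (β n t - β (n - 1) t))
    (hstring2 : ∀ n : ℕ, 1 ≤ n → ∀ t : ℝ, 3 * g n t * (β (n - 1) t + β n t) = (n : ℂ))
    (n : ℕ) (t : ℝ) :
    deriv (g n) t = 2 * g n t * β n t - (n : ℂ) / 3 := by
  cases n with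
  | zero =>
    rw [show g 0 = 0 from funext hg0]
    simp
  | succ k =>
    have hToda := hToda1 (k + 1) k.succ_pos t
    have hString := hstring2 (k + 1) k.succ_pos t
    simp only [Nat.add_sub_cancel, Nat.cast_succ] at hToda hString ⊢
    linear_combination hToda - (1 / 3 : ℂ) * hString

lemma deriv_β_eq (hToda2 : ∀ n : ℕ, ∀ t : ℝ, deriv (β n) t = g (n + 1) t - g n t) (n : ℕ) :
    deriv (β n) = g (n + 1) - g n :=
  funext (hToda2 n)

end TodaString

theorem stmt19_general (β g : ℕ → ℝ → ℂ)
    (hgdiff : ∀ n : ℕ, Differentiable ℝ (g n))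
    (hg0 : ∀ t : ℝ, g 0 t = 0)
    (hToda1 : ∀ n : ℕ, 1 ≤ n → ∀ t : ℝ,
      deriv (g n) t = g n t * (β n t - β (n - 1) t))
    (hToda2 : ∀ n : ℕ, ∀ t : ℝ, deriv (β n) t = g (n + 1) t - g n t)
    (hstring1 : ∀ n : ℕ, ∀ t : ℝ, g n t + g (n + 1) t + (β n t) ^ 2 = (t : ℂ) / 3)
    (hstring2 : ∀ n : ℕ, 1 ≤ n → ∀ t : ℝ, 3 * g n t * (β (n - 1) t + β n t) = (n : ℂ)) :
    (∀ n : ℕ, Differentiable ℝ (deriv (β n))) ∧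
    (∀ n : ℕ, ∀ t : ℝ,
      deriv (deriv (β n)) t =
        2 * (β n t) ^ 3 - (2 * (t : ℂ) / 3) * β n t + (2 * (n : ℂ) + 1) / 3) := by
  refine ⟨fun n => deriv_β_eq hToda2 n ▸ (hgdiff (n + 1)).sub (hgdiff n), fun n t => ?_⟩
  have hsecond : deriv (deriv (β n)) t = deriv (g (n + 1)) t - deriv (g n) t := by
    rw [deriv_β_eq hToda2]
    exact deriv_sub (hgdiff (n + 1) t) (hgdiff n t)
  rw [hsecond, deriv_g_succ_eq_sub hToda1 hstring2, deriv_g_eq_sub hg0 hToda1 hstring2]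
  linear_combination (-2 * β n t) * hstring1 n t

/-- **Painlevé II.** If differentiable functions `βₙ, gₙ : ℝ → ℂ`
(with `g₀ ≡ 0`) satisfy the Toda equations `gₙ' = gₙ(βₙ − β_{n−1})` (n ≥ 1),
`βₙ' = g_{n+1} − gₙ` (n ≥ 0), and the string equations
`gₙ + g_{n+1} + βₙ² = t/3` (n ≥ 0), `3gₙ(β_{n−1} + βₙ) = n` (n ≥ 1), then each
`βₙ` is twice differentiable and satisfies the Painlevé II equation
`βₙ'' = 2βₙ³ − (2t/3)βₙ + (2n+1)/3`. -/
theorem stmt19 (β g : ℕ → ℝ → ℂ)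
    (hβdiff : ∀ n : ℕ, Differentiable ℝ (β n))
    (hgdiff : ∀ n : ℕ, Differentiable ℝ (g n))
    (hg0 : ∀ t : ℝ, g 0 t = 0)
    (hToda1 : ∀ n : ℕ, 1 ≤ n → ∀ t : ℝ,
      deriv (g n) t = g n t * (β n t - β (n - 1) t))
    (hToda2 : ∀ n : ℕ, ∀ t : ℝ, deriv (β n) t = g (n + 1) t - g n t)
    (hstring1 : ∀ n : ℕ, ∀ t : ℝ, g n t + g (n + 1) t + (β n t) ^ 2 = (t : ℂ) / 3)
    (hstring2 : ∀ n : ℕ, 1 ≤ n → ∀ t : ℝ, 3 * g n t * (β (n - 1) t + β n t) = (n : ℂ)) :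
    (∀ n : ℕ, Differentiable ℝ (deriv (β n))) ∧
    (∀ n : ℕ, ∀ t : ℝ,
      deriv (deriv (β n)) t =
        2 * (β n t) ^ 3 - (2 * (t : ℂ) / 3) * β n t + (2 * (n : ℂ) + 1) / 3) :=
  stmt19_general β g hgdiff hg0 hToda1 hToda2 hstring1 hstring2
end
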